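/- arXiv:2308.13119 — 6 statements merged into one kernel-verified Lean document; each statement's English description precedes it below -/
import Mathlib

section
/- If M ⊆ R^p is generated by h_1,...,h_r, then the double M_D is generated by the elements (h_j)_D together with (z_i h_j)_D for 1 ≤ i ≤ n and 1 ≤ j ≤ r, where z_1,...,z_n are the coordinate functions. -/
/-- The double of `h ∈ R^p` along the two "pullback" homomorphisms `φ1, φ2 : R →+* S`. -/
def Lip.double {R S : Type*} [CommRing R] [CommRing S] {p : ℕ}
    (φ1 φ2 : R →+* S) (h : Fin p → R) : Fin p ⊕ Fin p → S :=
  Sum.elim (fun i => φ1 (h i)) (fun i => φ2 (h i))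

/-!
Doubling is additive but not `R`-linear: writing `m_L = doubleLeft φ1 m = (φ1 ∘ m, 0)`, one has
`(c • m)_D = φ2 c • m_D + (φ1 c - φ2 c) • m_L`. So `(c • m)_D` lies in the span `N` of the
proposed generators as soon as `m_D ∈ N` and `I • m_L ⊆ N`, where `I` is the ideal generated
by the `φ1 (z i) - φ2 (z i)`, and both properties pass from `m` to `c • m` and to sums. For a
generator `h j` the second one holds because `(φ1 (z i) - φ2 (z i)) • (h j)_L` is the
combination `(z i • h j)_D - φ2 (z i) • (h j)_D` of generators.
-/

namespace Lip

variable {R S : Type*} [CommRing R] [CommRing S] {p : ℕ}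

def doubleLeft (φ1 : R →+* S) (m : Fin p → R) : Fin p ⊕ Fin p → S :=
  Sum.elim (fun i => φ1 (m i)) 0

variable (φ1 φ2 : R →+* S)

@[simp]
theorem double_zero : double φ1 φ2 (0 : Fin p → R) = 0 := by
  ext (i | i) <;> simp [double]

theorem double_add (m m' : Fin p → R) :
    double φ1 φ2 (m + m') = double φ1 φ2 m + double φ1 φ2 m' := by
  ext (i | i) <;> simp [double]

theorem double_smul (c : R) (m : Fin p → R) :
    double φ1 φ2 (c • m) = φ2 c • double φ1 φ2 m + (φ1 c - φ2 c) • doubleLeft φ1 m := by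
  ext (i | i)
  · simp only [double, doubleLeft, Pi.add_apply, Pi.smul_apply, smul_eq_mul, map_mul,
      Sum.elim_inl]
    ring
  · simp [double, doubleLeft]

@[simp]
theorem doubleLeft_zero : doubleLeft φ1 (0 : Fin p → R) = 0 := by
  ext (i | i) <;> simp [doubleLeft]

theorem doubleLeft_add (m m' : Fin p → R) :
    doubleLeft φ1 (m + m') = doubleLeft φ1 m + doubleLeft φ1 m' := by
  ext (i | i) <;> simp [doubleLeft]

theorem doubleLeft_smul (c : R) (m : Fin p → R) :
    doubleLeft φ1 (c • m) = φ1 c • doubleLeft φ1 m := by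
  ext (i | i) <;> simp [doubleLeft]

variable {φ1 φ2}

theorem double_mem_and_smul_doubleLeft_mem_of_mem_span {N : Submodule S (Fin p ⊕ Fin p → S)}
    {I : Ideal S} (hI : ∀ c : R, φ1 c - φ2 c ∈ I) {g : Set (Fin p → R)}
    (hg : ∀ m ∈ g, double φ1 φ2 m ∈ N ∧ ∀ s ∈ I, s • doubleLeft φ1 m ∈ N)
    {m : Fin p → R} (hm : m ∈ Submodule.span R g) :
    double φ1 φ2 m ∈ N ∧ ∀ s ∈ I, s • doubleLeft φ1 m ∈ N := by
  induction hm using Submodule.span_induction with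
  | mem m hm => exact hg m hm
  | zero => exact ⟨by simp, fun s _ => by simp⟩
  | add m m' _ _ ih ih' =>
    refine ⟨by simpa only [double_add] using N.add_mem ih.1 ih'.1, fun s hs => ?_⟩
    simpa only [doubleLeft_add, smul_add] using N.add_mem (ih.2 s hs) (ih'.2 s hs)
  | smul c m _ ih =>
    refine ⟨?_, fun s hs => ?_⟩
    · rw [double_smul]
      exact N.add_mem (N.smul_mem _ ih.1) (ih.2 _ (hI c))
    · rw [doubleLeft_smul, smul_smul]
      exact ih.2 _ (I.mul_mem_right _ hs)

theorem smul_doubleLeft_mem_of_double_smul_mem {n : ℕ} {N : Submodule S (Fin p ⊕ Fin p → S)}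
    {z : Fin n → R} {m : Fin p → R} (hm : double φ1 φ2 m ∈ N)
    (hzm : ∀ i, double φ1 φ2 (z i • m) ∈ N) :
    ∀ s ∈ Ideal.span (Set.range fun i => φ1 (z i) - φ2 (z i)), s • doubleLeft φ1 m ∈ N := by
  suffices Ideal.span (Set.range fun i => φ1 (z i) - φ2 (z i)) ≤
      N.comap (LinearMap.toSpanSingleton S _ (doubleLeft φ1 m)) from fun s hs => this hs
  rw [Ideal.span_le]
  rintro _ ⟨i, rfl⟩
  have hgen : (φ1 (z i) - φ2 (z i)) • doubleLeft φ1 m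
      = double φ1 φ2 (z i • m) - φ2 (z i) • double φ1 φ2 m := by
    rw [double_smul]; abel
  simpa [hgen] using N.sub_mem (hzm i) (N.smul_mem _ hm)

end Lip

/-- If `M ⊆ R^p` is generated by `h 1, ..., h r`, then the double `M_D` (the
`S`-submodule generated by the doubles of elements of `M`) is generated by the `(h j)_D`
together with the `(z i • h j)_D`, where `z 1, ..., z n` are the coordinate functions,
assuming that `φ1 α − φ2 α` always lies in the ideal generated by the `φ1 (z i) − φ2 (z i)`. -/
theorem doubleSpan_generators {R S : Type*} [CommRing R] [CommRing S] {p r n : ℕ}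
    (φ1 φ2 : R →+* S) (z : Fin n → R)
    (hz : ∀ α : R, φ1 α - φ2 α ∈ Ideal.span (Set.range fun i => φ1 (z i) - φ2 (z i)))
    (h : Fin r → (Fin p → R)) (M : Submodule R (Fin p → R))
    (hM : M = Submodule.span R (Set.range h)) :
    Submodule.span S (Lip.double φ1 φ2 '' M)
      = Submodule.span S
          ((Set.range fun j => Lip.double φ1 φ2 (h j)) ∪
           (Set.range fun ij : Fin n × Fin r => Lip.double φ1 φ2 (z ij.1 • h ij.2))) := by
  subst hM
  apply le_antisymm
  · rw [Submodule.span_le]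
    rintro _ ⟨m, hm, rfl⟩
    refine (Lip.double_mem_and_smul_doubleLeft_mem_of_mem_span hz ?_ hm).1
    rintro _ ⟨j, rfl⟩
    refine ⟨Submodule.subset_span (Or.inl ⟨j, rfl⟩), ?_⟩
    exact Lip.smul_doubleLeft_mem_of_double_smul_mem (Submodule.subset_span (Or.inl ⟨j, rfl⟩))
      fun i => Submodule.subset_span (Or.inr ⟨(i, j), rfl⟩)
  · rw [Submodule.span_le]
    rintro _ (⟨j, rfl⟩ | ⟨⟨i, j⟩, rfl⟩)
    · exact Submodule.subset_span ⟨h j, Submodule.subset_span ⟨j, rfl⟩, rfl⟩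
    · exact Submodule.subset_span
        ⟨z i • h j, Submodule.smul_mem _ _ (Submodule.subset_span ⟨j, rfl⟩), rfl⟩
end

section
/- The 2-Lipschitz saturation is contained in the 3-Lipschitz saturation: if M has generic rank k on each irreducible component of X, then M_{S_2} ⊆ M_{S_3}. -/
/-- Integral closure of a submodule `N ⊆ A^ι` by the curve criterion. -/
def Lip.curveCl {A : Type*} [CommRing A] {ι : Type*} (N : Submodule A (ι → A)) :
    Set (ι → A) :=
  {h | ∀ φ : A →+* PowerSeries ℂ,
    (fun i => φ (h i)) ∈
      Submodule.span (PowerSeries ℂ) ((fun m : ι → A => fun i => φ (m i)) '' (N : Set (ι → A)))}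

/-- The double of an element of `R`. -/
def Lip.idDouble {R S : Type*} [CommRing R] [CommRing S] (φ1 φ2 : R →+* S) (a : R) :
    Fin 2 → S := ![φ1 a, φ2 a]

/-- The double of an ideal `I ⊆ R`. -/
def Lip.idealDouble {R S : Type*} [CommRing R] [CommRing S] (φ1 φ2 : R →+* S)
    (I : Ideal R) : Submodule S (Fin 2 → S) :=
  Submodule.span S (Lip.idDouble φ1 φ2 '' (I : Set R))

/-- The Lipschitz saturation of an ideal `I ⊆ R`, via Gaffney's characterization
`a ∈ I_S ↔ a_D ∈ closure (I_D)`. -/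
def Lip.sat {R S : Type*} [CommRing R] [CommRing S] (φ1 φ2 : R →+* S) (I : Ideal R) :
    Set R :=
  {a | Lip.idDouble φ1 φ2 a ∈ Lip.curveCl (Lip.idealDouble φ1 φ2 I)}

/-!
A `k × k` minor of `(h, M)` not using the column `h` is a minor of `M`, and one using `h` twice
vanishes. A minor using `h` exactly once is, by cofactor expansion along that column, `ψ · h`
for a functional `ψ` whose values `ψ · m` on the generators of `M` are again minors of `M`.
Hence `ψ · h ∈ (ψ · M)_S ⊆ (I_k(M))_S`, and as `(I_k(M))_S` is an ideal it contains
`I_k(h, M)`.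
-/

namespace Lip

section CurveClosure

variable {A : Type*} [CommRing A] {ι : Type*}

lemma mul_mem_span_of_forall_mul_mem {u : ι → A} {s : Set (ι → A)}
    (hs : ∀ w ∈ s, u * w ∈ Submodule.span A s) {w : ι → A}
    (hw : w ∈ Submodule.span A s) :
    u * w ∈ Submodule.span A s :=
  (Submodule.span_le (p := (Submodule.span A s).comap (LinearMap.mulLeft A u))).mpr hs hw

lemma add_mem_curveCl {N : Submodule A (ι → A)} {g h : ι → A} (hg : g ∈ curveCl N)
    (hh : h ∈ curveCl N) : g + h ∈ curveCl N := fun φ => by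
  convert add_mem (hg φ) (hh φ) using 1
  ext i
  simp

lemma mul_mem_curveCl {N : Submodule A (ι → A)} {u h : ι → A} (hN : ∀ n ∈ N, u * n ∈ N)
    (hh : h ∈ curveCl N) : u * h ∈ curveCl N := fun φ => by
  have hspan := mul_mem_span_of_forall_mul_mem (u := fun i => φ (u i)) ?_ (hh φ)
  · convert hspan using 1
    ext i
    simp
  rintro _ ⟨n, hn, rfl⟩
  exact Submodule.subset_span ⟨u * n, hN n hn, by ext; simp⟩

end CurveClosure

section Saturation

variable {R S : Type*} [CommRing R] [CommRing S] (φ1 φ2 : R →+* S)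

lemma idDouble_add (a b : R) :
    idDouble φ1 φ2 (a + b) = idDouble φ1 φ2 a + idDouble φ1 φ2 b := by
  ext i
  fin_cases i <;> simp [idDouble]

lemma idDouble_mul (a b : R) :
    idDouble φ1 φ2 (a * b) = idDouble φ1 φ2 a * idDouble φ1 φ2 b := by
  ext i
  fin_cases i <;> simp [idDouble]

lemma idDouble_mul_mem_idealDouble {I : Ideal R} (r : R) {n : Fin 2 → S}
    (hn : n ∈ idealDouble φ1 φ2 I) : idDouble φ1 φ2 r * n ∈ idealDouble φ1 φ2 I := by
  refine mul_mem_span_of_forall_mul_mem ?_ hn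
  rintro _ ⟨m, hm, rfl⟩
  rw [← idDouble_mul]
  exact Submodule.subset_span ⟨r * m, I.mul_mem_left r hm, rfl⟩

lemma mem_sat_of_mem {I : Ideal R} {a : R} (ha : a ∈ I) : a ∈ sat φ1 φ2 I := fun _ =>
  Submodule.subset_span ⟨_, Submodule.subset_span ⟨a, ha, rfl⟩, rfl⟩

lemma sat_mono {I J : Ideal R} (hIJ : I ≤ J) : sat φ1 φ2 I ⊆ sat φ1 φ2 J := fun _ ha φ =>
  Submodule.span_mono (Set.image_mono (Submodule.span_mono (Set.image_mono hIJ))) (ha φ)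

def satIdeal (I : Ideal R) : Ideal R where
  carrier := sat φ1 φ2 I
  zero_mem' := mem_sat_of_mem φ1 φ2 I.zero_mem
  add_mem' {a b} ha hb := by
    change idDouble φ1 φ2 (a + b) ∈ curveCl (idealDouble φ1 φ2 I)
    rw [idDouble_add]
    exact add_mem_curveCl ha hb
  smul_mem' r a ha := by
    change idDouble φ1 φ2 (r * a) ∈ curveCl (idealDouble φ1 φ2 I)
    rw [idDouble_mul]
    exact mul_mem_curveCl (fun n hn => idDouble_mul_mem_idealDouble φ1 φ2 r hn) ha

end Saturation

section Minors

variable {R : Type*} [CommRing R] {p n k : ℕ}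

/-- `I_k` of the module generated by the columns `v` of a `p × n` matrix. -/
def minorIdeal (k : ℕ) (v : Fin n → Fin p → R) : Ideal R :=
  Ideal.span {d | ∃ (I : Fin k → Fin p) (J : Fin k → Fin n),
    d = Matrix.det (Matrix.of fun a b : Fin k => v (J b) (I a))}

lemma det_mem_minorIdeal (v : Fin n → Fin p → R) (I : Fin k → Fin p) (J : Fin k → Fin n) :
    Matrix.det (Matrix.of fun a b => v (J b) (I a)) ∈ minorIdeal k v :=
  Ideal.subset_span ⟨I, J, rfl⟩

lemma det_cons_mem_minorIdeal_of_ne_zero (h : Fin p → R) (v : Fin n → Fin p → R)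
    (I : Fin k → Fin p) {J : Fin k → Fin (n + 1)} (hJ : ∀ b, J b ≠ 0) :
    Matrix.det (Matrix.of fun a b => (Fin.cons h v : Fin (n + 1) → Fin p → R) (J b) (I a))
      ∈ minorIdeal k v := by
  convert det_mem_minorIdeal v I fun b => (J b).pred (hJ b) using 3
  ext a b
  conv_lhs => rw [← Fin.succ_pred (J b) (hJ b), Fin.cons_succ]

lemma updateCol_of_comp {α : Type*} {m : ℕ} (c : Fin m → Fin p → α) (I : Fin k → Fin p)
    (J : Fin k → Fin m) (b₀ : Fin k) (j : Fin m) :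
    (Matrix.of fun a b => c (J b) (I a)).updateCol b₀ (fun a => c j (I a))
      = Matrix.of fun a b => c (Function.update J b₀ j b) (I a) := by
  ext a b
  by_cases hb : b = b₀
  · subst hb; simp
  · simp [Matrix.updateCol_ne hb, Function.update_of_ne hb]

lemma exists_sum_mul_eq {ι : Type*} [Fintype ι] [DecidableEq ι] (f : (ι → R) →ₗ[R] R) :
    ∃ ψ : ι → R, ∀ w, f w = ∑ i, ψ i * w i :=
  ⟨fun i => f fun j => if i = j then 1 else 0, fun w => by
    rw [LinearMap.pi_apply_eq_sum_univ f w]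
    exact Finset.sum_congr rfl fun i _ => by rw [smul_eq_mul, mul_comm]⟩

/-- The functional `ψ` is row `b₀` of the adjugate of the minor, pulled back along the row
selection `I`; replacing column `b₀` by `m` turns the minor into `ψ · m`. -/
lemma exists_cofactor_functional (h : Fin p → R) (v : Fin n → Fin p → R) (I : Fin k → Fin p)
    {J : Fin k → Fin (n + 1)} {b₀ : Fin k} (hb₀ : J b₀ = 0)
    (hJ : ∀ b, b ≠ b₀ → J b ≠ 0) :
    ∃ ψ : Fin p → R,
      ∑ i, ψ i * h i
        = Matrix.det (Matrix.of fun a b => (Fin.cons h v : Fin (n + 1) → Fin p → R) (J b) (I a))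
      ∧ ∀ m ∈ Submodule.span R (Set.range v), ∑ i, ψ i * m i ∈ minorIdeal k v := by
  set c : Fin (n + 1) → Fin p → R := Fin.cons h v
  set N : Matrix (Fin k) (Fin k) R := Matrix.of fun a b => c (J b) (I a)
  let f : (Fin p → R) →ₗ[R] R :=
    (LinearMap.proj b₀).comp ((Matrix.cramer N).comp (LinearMap.funLeft R R I))
  have hf (j : Fin (n + 1)) :
      f (c j) = Matrix.det (Matrix.of fun a b => c (Function.update J b₀ j b) (I a)) := by
    simp only [f, LinearMap.comp_apply, LinearMap.proj_apply, Matrix.cramer_apply]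
    exact congrArg Matrix.det (updateCol_of_comp c I J b₀ j)
  obtain ⟨ψ, hψ⟩ := exists_sum_mul_eq f
  refine ⟨ψ, ?_, fun m hm => ?_⟩
  · rw [← hψ, show h = c 0 from rfl, hf, ← hb₀, Function.update_eq_self]
  · have hgen : Set.range v ⊆ Submodule.comap f (minorIdeal k v) := by
      rintro _ ⟨t, rfl⟩
      rw [SetLike.mem_coe, Submodule.mem_comap, show v t = c t.succ from rfl, hf]
      refine det_cons_mem_minorIdeal_of_ne_zero h v I fun b => ?_
      by_cases hb : b = b₀
      · simp [hb, Fin.succ_ne_zero]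
      · simpa [Function.update_of_ne hb] using hJ b hb
    rw [← hψ]
    exact Submodule.span_le.mpr hgen hm

end Minors

end Lip

/-- `M_{S₂} ⊆ M_{S₃}`: if `M` is generated by the columns of `gen` (a module of generic
rank `k`) and `ψ·h ∈ (ψ·M)_S` for every `ψ : X → Hom(ℂ^p, ℂ)`, then
`I_k(h, M) ⊆ (I_k(M))_S`. -/
theorem satTwo_le_satThree {R S : Type*} [CommRing R] [CommRing S] {p r k : ℕ}
    (φ1 φ2 : R →+* S) (gen : Fin r → (Fin p → R)) (M : Submodule R (Fin p → R))
    (hM : M = Submodule.span R (Set.range gen)) (h : Fin p → R)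
    (hh : ∀ ψ : Fin p → R,
      (∑ i, ψ i * h i) ∈
        Lip.sat φ1 φ2 (Ideal.span {x : R | ∃ m ∈ M, x = ∑ i, ψ i * m i})) :
    (Ideal.span {d : R | ∃ (I : Fin k → Fin p) (J : Fin k → Fin (r + 1)),
        d = Matrix.det (Matrix.of fun a b : Fin k =>
          (Fin.cons h gen : Fin (r + 1) → Fin p → R) (J b) (I a))} : Set R)
      ⊆ Lip.sat φ1 φ2
          (Ideal.span {d : R | ∃ (I : Fin k → Fin p) (J : Fin k → Fin r),
            d = Matrix.det (Matrix.of fun a b : Fin k => gen (J b) (I a))}) := by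
  subst hM
  change ((Ideal.span _ : Ideal R) : Set R) ⊆
    (Lip.satIdeal φ1 φ2 (Lip.minorIdeal k gen) : Set R)
  refine Ideal.span_le.mpr ?_
  rintro d ⟨I, J, rfl⟩
  by_cases hJ : Function.Injective J
  · by_cases hJ0 : ∃ b₀, J b₀ = 0
    · obtain ⟨b₀, hb₀⟩ := hJ0
      obtain ⟨ψ, hψh, hψM⟩ := Lip.exists_cofactor_functional h gen I hb₀
        fun b hb h0 => hb (hJ (h0.trans hb₀.symm))
      rw [← hψh]
      refine Lip.sat_mono φ1 φ2 (Ideal.span_le.mpr ?_) (hh ψ)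
      rintro _ ⟨m, hm, rfl⟩
      exact hψM m hm
    · exact Lip.mem_sat_of_mem φ1 φ2
        (Lip.det_cons_mem_minorIdeal_of_ne_zero h gen I (not_exists.mp hJ0))
  · obtain ⟨b₁, b₂, hJ₁₂, hne⟩ : ∃ b₁ b₂, J b₁ = J b₂ ∧ b₁ ≠ b₂ := by
      simpa [Function.Injective] using hJ
    rw [Matrix.det_zero_of_column_eq hne fun a => by simp [hJ₁₂]]
    exact zero_mem _
end

section
/- The 1-Lipschitz saturation is contained in the 2-Lipschitz saturation: M_{S_1} ⊆ M_{S_2}. -/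
/-! Pull everything back along a curve `χ`. The curve criterion for `h_D` writes `χ ∘ h_D` as a
power-series combination `∑ αⱼ • χ ∘ (mⱼ)_D` with `mⱼ ∈ M`. Contracting the two halves of a double
against `χ ∘ φ₁ ∘ ψ` and `χ ∘ φ₂ ∘ ψ` is linear over the power series ring and sends `χ ∘ g_D` to
`χ ∘ (ψ·g)_D`, so `χ ∘ (ψ·h)_D = ∑ αⱼ • χ ∘ (ψ·mⱼ)_D`, with each `ψ·mⱼ ∈ ψ·M`. -/

namespace Lip

variable {R S P : Type*} [CommRing R] [CommRing S] [CommRing P]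

def mapCoords (χ : S →+* P) (ι : Type*) : (ι → S) →ₛₗ[χ] (ι → P) where
  toFun m i := χ (m i)
  map_add' m n := by ext; simp
  map_smul' s m := by ext; simp

def dotDouble {ι : Type*} [Fintype ι] (a b : ι → P) : (ι ⊕ ι → P) →ₗ[P] (Fin 2 → P) where
  toFun v := ![∑ i, a i * v (Sum.inl i), ∑ i, b i * v (Sum.inr i)]
  map_add' v w := by
    ext j; fin_cases j <;> simp [mul_add, Finset.sum_add_distrib]
  map_smul' c v := by
    ext j; fin_cases j <;> simp [Finset.mul_sum, mul_left_comm]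

lemma mapCoords_double {p : ℕ} (χ : S →+* P) (φ1 φ2 : R →+* S) (h : Fin p → R) :
    mapCoords χ _ (double φ1 φ2 h) = double (χ.comp φ1) (χ.comp φ2) h := by
  ext (i | i) <;> rfl

lemma mapCoords_idDouble (χ : S →+* P) (φ1 φ2 : R →+* S) (a : R) :
    mapCoords χ _ (idDouble φ1 φ2 a) = idDouble (χ.comp φ1) (χ.comp φ2) a := by
  ext j
  fin_cases j <;> rfl

lemma idDouble_sum_mul {p : ℕ} (φ1 φ2 : R →+* P) (ψ h : Fin p → R) :
    idDouble φ1 φ2 (∑ i, ψ i * h i) = dotDouble (φ1 ∘ ψ) (φ2 ∘ ψ) (double φ1 φ2 h) := by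
  ext j
  fin_cases j <;> simp [idDouble, dotDouble, double]

lemma mapCoords_mem_span_of_mem_curveCl_span {ι : Type*} {T : Set (ι → S)} {x : ι → S}
    (hx : x ∈ curveCl (Submodule.span S T)) (χ : S →+* PowerSeries ℂ) :
    mapCoords χ ι x ∈ Submodule.span (PowerSeries ℂ) (mapCoords χ ι '' T) :=
  Submodule.span_le.2 (Submodule.image_span_subset_span (mapCoords χ ι) T) (hx χ)

lemma idDouble_mem_span_mapCoords_idealDouble (χ : S →+* P) (φ1 φ2 : R →+* S) {I : Ideal R}
    {a : R} (ha : a ∈ I) :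
    idDouble (χ.comp φ1) (χ.comp φ2) a ∈
      Submodule.span P (mapCoords χ _ '' (idealDouble φ1 φ2 I : Set (Fin 2 → S))) :=
  Submodule.subset_span
    ⟨idDouble φ1 φ2 a, Submodule.subset_span ⟨a, ha, rfl⟩, mapCoords_idDouble χ φ1 φ2 a⟩

end Lip

/-- `M_{S₁} ⊆ M_{S₂}`: if `h_D ∈ closure (M_D)` then for every
`ψ : X → Hom(ℂ^p, ℂ)` (modeled by `ψ : Fin p → R`), `ψ·h` lies in the Lipschitz
saturation of the ideal `ψ·M`. -/
theorem satOne_le_satTwo {R S : Type*} [CommRing R] [CommRing S] {p : ℕ}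
    (φ1 φ2 : R →+* S) (M : Submodule R (Fin p → R)) (h : Fin p → R)
    (hh : Lip.double φ1 φ2 h ∈ Lip.curveCl (Submodule.span S (Lip.double φ1 φ2 '' M))) :
    ∀ ψ : Fin p → R,
      (∑ i, ψ i * h i) ∈
        Lip.sat φ1 φ2 (Ideal.span {x : R | ∃ m ∈ M, x = ∑ i, ψ i * m i}) := by
  intro ψ χ
  have hχ : Lip.double (χ.comp φ1) (χ.comp φ2) h ∈
      Submodule.span (PowerSeries ℂ) (Lip.double (χ.comp φ1) (χ.comp φ2) '' M) := by
    simpa only [Set.image_image, Lip.mapCoords_double] using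
      Lip.mapCoords_mem_span_of_mem_curveCl_span hh χ
  have hψ := Submodule.apply_mem_span_image_of_mem_span
    (Lip.dotDouble (χ.comp φ1 ∘ ψ) (χ.comp φ2 ∘ ψ)) hχ
  simp only [Set.image_image, ← Lip.idDouble_sum_mul] at hψ
  change Lip.mapCoords χ _ (Lip.idDouble φ1 φ2 _) ∈ Submodule.span _ (Lip.mapCoords χ _ '' _)
  rw [Lip.mapCoords_idDouble]
  refine Submodule.span_le.2 ?_ hψ
  rintro _ ⟨m, hm, rfl⟩
  exact Lip.idDouble_mem_span_mapCoords_idealDouble χ φ1 φ2 (Ideal.subset_span ⟨m, hm, rfl⟩)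
end

section
/- For every t_1,...,t_k ∈ {1,...,n} and k-indexes I, J, K, L, the product (z_{t_1} − z'_{t_1})⋯(z_{t_k} − z'_{t_k})·det(M_{IJ})·det(M'_{KL}) lies in the ideal I_{2k}(M_D) of 2k×2k minors of a generator matrix of the double M_D. -/
/-- The generator matrix `[M_D] = [[M], 0; [M]', Δ·[M]']` of the double `M_D`, where
`[M]` has columns `g j` and the right-hand block has columns
`(z i − z' i)·(j-th column of [M]')`. Rows are `Fin p ⊕ Fin p`, columns are
`Fin r ⊕ Fin n × Fin r`. -/
def Lip.doubleMatrix {R S : Type*} [CommRing R] [CommRing S] {p r n : ℕ}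
    (φ1 φ2 : R →+* S) (z : Fin n → R) (g : Fin r → (Fin p → R)) :
    Matrix (Fin p ⊕ Fin p) (Fin r ⊕ Fin n × Fin r) S :=
  fun i c =>
    match i, c with
    | Sum.inl i, Sum.inl j => φ1 (g j i)
    | Sum.inr i, Sum.inl j => φ2 (g j i)
    | Sum.inl _, Sum.inr _ => 0
    | Sum.inr i, Sum.inr (a, j) => (φ1 (z a) - φ2 (z a)) * φ2 (g j i)

/-- The ideal `I_{2k}(M_D)` of `2k×2k` minors of the generator matrix of the double. -/
def Lip.I2k {R S : Type*} [CommRing R] [CommRing S] {p r n : ℕ}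
    (φ1 φ2 : R →+* S) (z : Fin n → R) (g : Fin r → (Fin p → R)) (k : ℕ) : Ideal S :=
  Ideal.span {d : S | ∃ (RI : Fin (2 * k) → Fin p ⊕ Fin p)
      (CJ : Fin (2 * k) → Fin r ⊕ Fin n × Fin r),
    d = Matrix.det (Matrix.of fun a b : Fin (2 * k) =>
      Lip.doubleMatrix φ1 φ2 z g (RI a) (CJ b))}

/-! The rows `I ⊔ K'` and columns `J ⊔ (t, L)'` of `[M_D]` cut out a block lower-triangular
`2k × 2k` minor whose diagonal blocks are `M_{IJ}` and `M'_{KL} · diag(z_{t_l} − z'_{t_l})`;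
its determinant is therefore the product in question. -/

namespace Lip

open Matrix

variable {R S : Type*} [CommRing R] [CommRing S] {p r n : ℕ}
  (φ1 φ2 : R →+* S) (z : Fin n → R) (g : Fin r → (Fin p → R))

theorem det_submatrix_mem_I2k {k : ℕ} {ι : Type*} [Fintype ι] [DecidableEq ι]
    (hι : Fintype.card ι = 2 * k) (rows : ι → Fin p ⊕ Fin p)
    (cols : ι → Fin r ⊕ Fin n × Fin r) :
    ((doubleMatrix φ1 φ2 z g).submatrix rows cols).det ∈ I2k φ1 φ2 z g k := by
  let e : Fin (2 * k) ≃ ι := (Fintype.equivFinOfCardEq hι).symm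
  exact Ideal.subset_span ⟨rows ∘ e, cols ∘ e, (det_submatrix_equiv_self e _).symm⟩

theorem doubleMatrix_submatrix_sumElim {k : ℕ} (t : Fin k → Fin n) (I K : Fin k → Fin p)
    (J L : Fin k → Fin r) :
    (doubleMatrix φ1 φ2 z g).submatrix (Sum.elim (Sum.inl ∘ I) (Sum.inr ∘ K))
        (Sum.elim (Sum.inl ∘ J) fun l => Sum.inr (t l, L l)) =
      fromBlocks (of fun a b => φ1 (g (J b) (I a))) 0 (of fun a b => φ2 (g (J b) (K a)))
        (of (fun a b => φ2 (g (L b) (K a))) *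
          diagonal fun l => φ1 (z (t l)) - φ2 (z (t l))) := by
  ext (a | a) (b | b) <;> simp [doubleMatrix, mul_comm]

end Lip

/-- For all `t : Fin k → Fin n` and `k`-indexes `I, J, K, L`, the product
`(z t₁ − z' t₁) ⋯ (z tₖ − z' tₖ) · det(M_{IJ}) · det(M'_{KL})` lies in `I_{2k}(M_D)`. -/
theorem prod_det_mem_I2k {R S : Type*} [CommRing R] [CommRing S] {p r n k : ℕ}
    (φ1 φ2 : R →+* S) (z : Fin n → R) (g : Fin r → (Fin p → R))
    (t : Fin k → Fin n) (I K : Fin k → Fin p) (J L : Fin k → Fin r) :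
    (∏ l, (φ1 (z (t l)) - φ2 (z (t l))))
      * Matrix.det (Matrix.of fun a b : Fin k => φ1 (g (J b) (I a)))
      * Matrix.det (Matrix.of fun a b : Fin k => φ2 (g (L b) (K a)))
      ∈ Lip.I2k φ1 φ2 z g k := by
  have hminor := Lip.det_submatrix_mem_I2k φ1 φ2 z g (k := k) (by simp [two_mul])
    (Sum.elim (Sum.inl ∘ I) (Sum.inr ∘ K))
    (Sum.elim (Sum.inl ∘ J) fun l => Sum.inr (t l, L l))
  rw [Lip.doubleMatrix_submatrix_sumElim, Matrix.det_fromBlocks_zero₁₂, Matrix.det_mul,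
    Matrix.det_diagonal] at hminor
  convert hminor using 1
  ring
end

section
/- I_Δ^k · I_2((I_k(M))_D) ⊆ I_{2k}(M_D) at (x,x), where I_Δ is the ideal of the diagonal generated by {z_i − z'_i : i=1,...,n}. -/
/-- The generator matrix of the double `(I_k(M))_D` of the minor ideal `I_k(M)`: its
columns are the `(det M_{IJ}, det M'_{IJ})` together with the
`(0, (z i − z' i)·det M'_{KL})`, indexed by `k`-indexes `(I, J)`. -/
def Lip.minorDoubleMatrix {R S : Type*} [CommRing R] [CommRing S] {p r n : ℕ}
    (φ1 φ2 : R →+* S) (z : Fin n → R) (g : Fin r → (Fin p → R)) (k : ℕ) :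
    Matrix (Fin 2) (((Fin k → Fin p) × (Fin k → Fin r)) ⊕
      (Fin n × ((Fin k → Fin p) × (Fin k → Fin r)))) S :=
  fun i c =>
    match i, c with
    | 0, Sum.inl (I, J) => φ1 (Matrix.det (Matrix.of fun a b : Fin k => g (J b) (I a)))
    | 1, Sum.inl (I, J) => φ2 (Matrix.det (Matrix.of fun a b : Fin k => g (J b) (I a)))
    | 0, Sum.inr _ => 0
    | 1, Sum.inr (i, (K, L)) =>
        (φ1 (z i) - φ2 (z i)) * φ2 (Matrix.det (Matrix.of fun a b : Fin k => g (L b) (K a)))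

/-- The ideal of `2×2` minors of a `2`-row matrix. -/
def Lip.I2 {S : Type*} [CommRing S] {ι : Type*} (E : Matrix (Fin 2) ι S) : Ideal S :=
  Ideal.span {d : S | ∃ c1 c2 : ι, d = E 0 c1 * E 1 c2 - E 0 c2 * E 1 c1}

/-!
Take rows `I` of `[M]` and `I'` of `[M]'` against the columns `J` of `[M]` and the columns
`(a t, J' t)` of `Δ·[M]'`: this `2k × 2k` minor of `[M_D]` is block lower triangular, so it equals
`det M_{IJ} · ∏ t, (z (a t) − z' (a t)) · det M'_{I'J'}`. Multiplying a `2 × 2` minor of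
`(I_k(M))_D` by a generator `∏ t, (z (a t) − z' (a t))` of `I_Δ^k` gives a difference of two terms,
each zero or such a minor of `[M_D]`, possibly times one more factor `z i − z' i`.
-/

open scoped Pointwise in
theorem Set.range_pow_eq_range_prod {M ι : Type*} [CommMonoid M] (v : ι → M) (k : ℕ) :
    Set.range v ^ k = Set.range fun a : Fin k → ι => ∏ t, v (a t) := by
  ext x
  simp only [Set.mem_pow, List.prod_ofFn, Set.mem_range]
  constructor
  · rintro ⟨f, rfl⟩
    choose a ha using fun t => (f t).2
    exact ⟨a, by simp only [ha]⟩
  · rintro ⟨a, rfl⟩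
    exact ⟨fun t => ⟨v (a t), a t, rfl⟩, rfl⟩

theorem Ideal.span_range_pow {S ι : Type*} [CommSemiring S] (v : ι → S) (k : ℕ) :
    Ideal.span (Set.range v) ^ k = Ideal.span (Set.range fun a : Fin k → ι => ∏ t, v (a t)) := by
  rw [← Set.range_pow_eq_range_prod]
  exact Submodule.span_pow _ k

namespace Lip

variable {R S : Type*} [CommRing R] [CommRing S] {p r n k : ℕ}
  (φ1 φ2 : R →+* S) (z : Fin n → R) (g : Fin r → (Fin p → R))

theorem det_submatrix_sum_mem_I2k (RI : Fin k ⊕ Fin k → Fin p ⊕ Fin p)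
    (CJ : Fin k ⊕ Fin k → Fin r ⊕ Fin n × Fin r) :
    ((doubleMatrix φ1 φ2 z g).submatrix RI CJ).det ∈ I2k φ1 φ2 z g k := by
  let e : Fin (2 * k) ≃ Fin k ⊕ Fin k := (finCongr (two_mul k)).trans finSumFinEquiv.symm
  refine Ideal.subset_span ⟨RI ∘ e, CJ ∘ e, ?_⟩
  rw [← Matrix.det_submatrix_equiv_self e]
  rfl

theorem doubleMatrix_submatrix_eq_fromBlocks (I I' : Fin k → Fin p) (J J' : Fin k → Fin r)
    (a : Fin k → Fin n) :
    (doubleMatrix φ1 φ2 z g).submatrix (Sum.map I I')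
        (Sum.elim (Sum.inl ∘ J) fun t => Sum.inr (a t, J' t)) =
      Matrix.fromBlocks ((Matrix.of fun s t => g (J t) (I s)).map φ1) 0
        ((Matrix.of fun s t => g (J t) (I' s)).map φ2)
        (Matrix.of fun s t => (φ1 (z (a t)) - φ2 (z (a t))) *
          (Matrix.of fun s t => g (J' t) (I' s)).map φ2 s t) := by
  ext (s | s) (t | t) <;> rfl

theorem prod_diag_mul_minor_mul_minor_mem_I2k (I I' : Fin k → Fin p) (J J' : Fin k → Fin r)
    (a : Fin k → Fin n) :
    (∏ t, (φ1 (z (a t)) - φ2 (z (a t)))) *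
        (φ1 (Matrix.of fun s t => g (J t) (I s)).det *
          φ2 (Matrix.of fun s t => g (J' t) (I' s)).det) ∈
      I2k φ1 φ2 z g k := by
  have h := det_submatrix_sum_mem_I2k φ1 φ2 z g (Sum.map I I')
    (Sum.elim (Sum.inl ∘ J) fun t => Sum.inr (a t, J' t))
  rw [doubleMatrix_submatrix_eq_fromBlocks, Matrix.det_fromBlocks_zero₁₂,
    Matrix.det_mul_row] at h
  rw [RingHom.map_det, RingHom.map_det, RingHom.mapMatrix_apply, RingHom.mapMatrix_apply]
  convert h using 1
  ring

theorem prod_diag_mul_minorDoubleMatrix_mem_I2k (a : Fin k → Fin n) (c1 c2) :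
    (∏ t, (φ1 (z (a t)) - φ2 (z (a t)))) *
        (minorDoubleMatrix φ1 φ2 z g k 0 c1 * minorDoubleMatrix φ1 φ2 z g k 1 c2) ∈
      I2k φ1 φ2 z g k := by
  rcases c1 with ⟨I, J⟩ | _
  · rcases c2 with ⟨I', J'⟩ | ⟨i, K, L⟩
    · exact prod_diag_mul_minor_mul_minor_mem_I2k φ1 φ2 z g I I' J J' a
    · have h := prod_diag_mul_minor_mul_minor_mem_I2k φ1 φ2 z g I K J L a
      convert Ideal.mul_mem_left _ (φ1 (z i) - φ2 (z i)) h using 1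
      simp only [minorDoubleMatrix]
      ring
  · simp only [minorDoubleMatrix, zero_mul, mul_zero, Submodule.zero_mem]

end Lip

/-- `I_Δ^k · I_2((I_k(M))_D) ⊆ I_{2k}(M_D)`, where `I_Δ` is the ideal of the diagonal,
generated by the `z i − z' i`. -/
theorem diagPow_mul_I2_le_I2k {R S : Type*} [CommRing R] [CommRing S] {p r n k : ℕ}
    (φ1 φ2 : R →+* S) (z : Fin n → R) (g : Fin r → (Fin p → R)) :
    (Ideal.span (Set.range fun i => φ1 (z i) - φ2 (z i))) ^ k *
        Lip.I2 (Lip.minorDoubleMatrix φ1 φ2 z g k)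
      ≤ Lip.I2k φ1 φ2 z g k := by
  rw [Ideal.span_range_pow, Lip.I2, Ideal.span_mul_span', Ideal.span_le]
  rintro _ ⟨_, ⟨a, rfl⟩, _, ⟨c1, c2, rfl⟩, rfl⟩
  dsimp only
  rw [mul_sub]
  exact sub_mem (Lip.prod_diag_mul_minorDoubleMatrix_mem_I2k φ1 φ2 z g a c1 c2)
    (Lip.prod_diag_mul_minorDoubleMatrix_mem_I2k φ1 φ2 z g a c2 c1)
end

section
/- If I_k(M) is a principal ideal (generated by a single k×k minor det(M_{IJ})), then I_Δ^{k−1} · I_2((I_k(M))_D) ⊆ I_{2k}(M_D) at (x,x). -/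
/-!
Write `g = det M_{I₀J₀}` and `δ_i = φ1 (z i) - φ2 (z i)`. Every `k×k` minor is `λ g`, so every
`2×2` minor of `[(I_k(M))_D]` is `φ1 g · φ2 g` times an element of `I_Δ`: for two columns
`(φ1 (λ g), φ2 (λ g))`, `(φ1 (μ g), φ2 (μ g))` the cofactor is
`φ2 μ (φ1 λ - φ2 λ) - φ2 λ (φ1 μ - φ2 μ)`, and the other minors carry a factor `δ_i`.
Conversely, the submatrix of `[M_D]` on the rows `I₀ ⊔ I₀` and the columns `J₀ ⊔ {(i_b, J₀ b)}`
is block lower triangular with diagonal blocks `φ1 M_{I₀J₀}` and `φ2 M_{I₀J₀}`, the latter with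
columns scaled by `δ_{i_b}`, so `δ_{i_1} ⋯ δ_{i_k} · φ1 g · φ2 g` is a `2k×2k` minor of `[M_D]`.
Hence `I_Δ^{k-1} I_2 ⊆ I_Δ^k (φ1 g φ2 g) ⊆ I_{2k}(M_D)`.
-/

theorem Ideal.span_range_pow_le {S ι : Type*} [CommRing S] (f : ι → S) (m : ℕ) {J : Ideal S}
    (h : ∀ i : Fin m → ι, ∏ b, f (i b) ∈ J) : Ideal.span (Set.range f) ^ m ≤ J := by
  rw [Ideal.span, Submodule.span_pow, Submodule.span_le]
  intro x hx
  obtain ⟨F, rfl⟩ := Set.mem_pow.1 hx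
  choose i hi using fun b => (F b).2
  simpa [List.prod_ofFn, hi] using h i

namespace Lip

variable {R S : Type*} [CommRing R] [CommRing S]

def minor {p r k : ℕ} (g : Fin r → Fin p → R) (I : Fin k → Fin p) (J : Fin k → Fin r) : R :=
  Matrix.det (Matrix.of fun a b : Fin k => g (J b) (I a))

theorem map_mul_map_mem_span_singleton (φ1 φ2 : R →+* S) {g a b : R}
    (ha : a ∈ Ideal.span {g}) (hb : b ∈ Ideal.span {g}) :
    φ1 a * φ2 b ∈ Ideal.span {φ1 g * φ2 g} := by
  obtain ⟨l, rfl⟩ := Ideal.mem_span_singleton'.1 ha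
  obtain ⟨m, rfl⟩ := Ideal.mem_span_singleton'.1 hb
  exact Ideal.mem_span_singleton'.2 ⟨φ1 l * φ2 m, by simp only [map_mul]; ring⟩

theorem map_mul_map_sub_mem_mul_span_singleton {φ1 φ2 : R →+* S} {D : Ideal S}
    (hD : ∀ α, φ1 α - φ2 α ∈ D) {g a b : R}
    (ha : a ∈ Ideal.span {g}) (hb : b ∈ Ideal.span {g}) :
    φ1 a * φ2 b - φ1 b * φ2 a ∈ D * Ideal.span {φ1 g * φ2 g} := by
  obtain ⟨l, rfl⟩ := Ideal.mem_span_singleton'.1 ha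
  obtain ⟨m, rfl⟩ := Ideal.mem_span_singleton'.1 hb
  have h : φ1 (l * g) * φ2 (m * g) - φ1 (m * g) * φ2 (l * g)
      = (φ2 m * (φ1 l - φ2 l) - φ2 l * (φ1 m - φ2 m)) * (φ1 g * φ2 g) := by
    simp only [map_mul]; ring
  rw [h]
  exact Ideal.mul_mem_mul (sub_mem (D.mul_mem_left _ (hD l)) (D.mul_mem_left _ (hD m)))
    (Ideal.mem_span_singleton_self _)

variable {p r n k : ℕ} {φ1 φ2 : R →+* S} {z : Fin n → R} {g : Fin r → Fin p → R}

theorem I2_minorDoubleMatrix_le {D : Ideal S} (hD : ∀ α, φ1 α - φ2 α ∈ D) {g0 : R}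
    (hmin : ∀ (I : Fin k → Fin p) (J : Fin k → Fin r), minor g I J ∈ Ideal.span {g0}) :
    I2 (minorDoubleMatrix φ1 φ2 z g k) ≤ D * Ideal.span {φ1 g0 * φ2 g0} := by
  rw [I2, Ideal.span_le]
  rintro _ ⟨⟨I, J⟩ | ⟨i, I, J⟩, ⟨I', J'⟩ | ⟨i', I', J'⟩, rfl⟩
  · exact map_mul_map_sub_mem_mul_span_singleton hD (hmin I J) (hmin I' J')
  · show φ1 (minor g I J) * ((φ1 (z i') - φ2 (z i')) * φ2 (minor g I' J')) - 0 * _ ∈ _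
    rw [zero_mul, sub_zero, mul_left_comm]
    exact Ideal.mul_mem_mul (hD _) (map_mul_map_mem_span_singleton φ1 φ2 (hmin I J) (hmin I' J'))
  · show 0 * _ - φ1 (minor g I' J') * ((φ1 (z i) - φ2 (z i)) * φ2 (minor g I J)) ∈ _
    rw [zero_mul, zero_sub, mul_left_comm]
    exact neg_mem <|
      Ideal.mul_mem_mul (hD _) (map_mul_map_mem_span_singleton φ1 φ2 (hmin I' J') (hmin I J))
  · show 0 * _ - 0 * _ ∈ _
    rw [zero_mul, zero_mul, sub_self]
    exact zero_mem _

theorem prod_mul_map_mul_map_minor_mem_I2k (I : Fin k → Fin p) (J : Fin k → Fin r)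
    (i : Fin k → Fin n) :
    (∏ b, (φ1 (z (i b)) - φ2 (z (i b)))) * (φ1 (minor g I J) * φ2 (minor g I J))
      ∈ I2k φ1 φ2 z g k := by
  let M : Matrix (Fin k) (Fin k) R := Matrix.of fun a b => g (J b) (I a)
  let e : Fin (2 * k) ≃ Fin k ⊕ Fin k := (finCongr (two_mul k)).trans finSumFinEquiv.symm
  refine Ideal.subset_span
    ⟨fun a => Sum.map I I (e a), fun b => Sum.map J (fun c => (i c, J c)) (e b), ?_⟩
  let N : Matrix (Fin k ⊕ Fin k) (Fin k ⊕ Fin k) S := Matrix.of fun a b =>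
    doubleMatrix φ1 φ2 z g (Sum.map I I a) (Sum.map J (fun c => (i c, J c)) b)
  have hblock : N = Matrix.fromBlocks (φ1.mapMatrix M) 0 (φ2.mapMatrix M)
      (Matrix.of fun a b => (φ1 (z (i b)) - φ2 (z (i b))) * φ2.mapMatrix M a b) := by
    ext (a | a) (b | b) <;> rfl
  change _ = (N.submatrix e e).det
  rw [Matrix.det_submatrix_equiv_self, hblock, Matrix.det_fromBlocks_zero₁₂,
    Matrix.det_mul_row, minor, RingHom.map_det, RingHom.map_det]
  ring

theorem diagPow_mul_span_singleton_le_I2k (I : Fin k → Fin p) (J : Fin k → Fin r) :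
    Ideal.span (Set.range fun i => φ1 (z i) - φ2 (z i)) ^ k *
        Ideal.span {φ1 (minor g I J) * φ2 (minor g I J)} ≤ I2k φ1 φ2 z g k := by
  have hcolon : Ideal.span (Set.range fun i => φ1 (z i) - φ2 (z i)) ^ k
      ≤ (I2k φ1 φ2 z g k).colon {φ1 (minor g I J) * φ2 (minor g I J)} :=
    Ideal.span_range_pow_le _ k fun i =>
      Submodule.mem_colon_singleton.2 (prod_mul_map_mul_map_minor_mem_I2k I J i)
  rw [mul_comm, Ideal.span_singleton_mul_le_iff]
  intro x hx
  rw [mul_comm]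
  exact Submodule.mem_colon_singleton.1 (hcolon hx)

end Lip

/-- If `I_k(M)` is principal, generated by a single `k×k` minor `det M_{I₀J₀}`, then
`I_Δ^{k−1} · I_2((I_k(M))_D) ⊆ I_{2k}(M_D)`. The hypothesis `hz` expresses that
`φ1 α − φ2 α` always lies in the diagonal ideal `I_Δ`, as holds for `O_{X×X}`. -/
theorem diagPow_mul_I2_le_I2k_of_principal {R S : Type*} [CommRing R] [CommRing S]
    {p r n k : ℕ} (φ1 φ2 : R →+* S) (z : Fin n → R) (g : Fin r → (Fin p → R))
    (hz : ∀ α : R, φ1 α - φ2 α ∈ Ideal.span (Set.range fun i => φ1 (z i) - φ2 (z i)))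
    (I0 : Fin k → Fin p) (J0 : Fin k → Fin r)
    (hprin : Ideal.span {d : R | ∃ (I : Fin k → Fin p) (J : Fin k → Fin r),
        d = Matrix.det (Matrix.of fun a b : Fin k => g (J b) (I a))}
      = Ideal.span {Matrix.det (Matrix.of fun a b : Fin k => g (J0 b) (I0 a))}) :
    (Ideal.span (Set.range fun i => φ1 (z i) - φ2 (z i))) ^ (k - 1) *
        Lip.I2 (Lip.minorDoubleMatrix φ1 φ2 z g k)
      ≤ Lip.I2k φ1 φ2 z g k := by
  set IΔ := Ideal.span (Set.range fun i => φ1 (z i) - φ2 (z i))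
  set G := φ1 (Lip.minor g I0 J0) * φ2 (Lip.minor g I0 J0)
  have hminor (I : Fin k → Fin p) (J : Fin k → Fin r) :
      Lip.minor g I J ∈ Ideal.span {Lip.minor g I0 J0} :=
    hprin ▸ Ideal.subset_span ⟨I, J, rfl⟩
  calc IΔ ^ (k - 1) * Lip.I2 (Lip.minorDoubleMatrix φ1 φ2 z g k)
      ≤ IΔ ^ (k - 1) * (IΔ * Ideal.span {G}) :=
        Ideal.mul_mono_right (Lip.I2_minorDoubleMatrix_le hz hminor)
    _ = IΔ ^ (k - 1 + 1) * Ideal.span {G} := by rw [pow_succ, mul_assoc]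
    _ ≤ IΔ ^ k * Ideal.span {G} := Ideal.mul_mono_left (Ideal.pow_le_pow_right (by omega))
    _ ≤ Lip.I2k φ1 φ2 z g k := Lip.diagPow_mul_span_singleton_le_I2k I0 J0
end
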